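/- Let G be a finite simple graph whose complement contains an induced cycle, and let m be the maximum n ≥ 3 such that cycleGraph n embeds into the complement of G. Let S be a set of natural numbers each strictly greater than m, and let D_S be the disjoint union of the cycle graphs C_s for s ∈ S. Then: (1) there is no graph embedding of G into the complement of D_S (the connected union of the complements of the cycles C_s, s ∈ S), so this graph is G-free; and (2) for every k ≥ 3, the complement of cycleGraph k embeds into the complement of D_S if and only if k ∈ S. -/

import Mathlib

/-!
A cycle is connected, so an embedding of `C_k` (`k ≥ 3`) into `D_S` lands in a single summand
`C_s`; and an embedding `C_k ↪ C_s` is onto, because both graphs are 2-regular and `C_s` is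
connected, whence `k = s ∈ S`. Complementing, the induced `C_m` of `Gᶜ` would give `m ∈ S`,
contradicting `m < s` for all `s ∈ S`; and `(C_k)ᶜ` embeds in `(D_S)ᶜ` exactly when `k ∈ S`.
-/

open SimpleGraph

/-- The disjoint union of the cycle graphs `C_s` for `s ∈ S`: the simple graph on the sigma
type `Σ s : S, Fin s` in which two vertices are adjacent iff they lie in the same summand
`s` and are adjacent in `cycleGraph s`. -/
def cyclesDisjointUnion (S : Set ℕ) : SimpleGraph (Σ s : S, Fin (s : ℕ)) where
  Adj x y := ∃ h : (x.1 : ℕ) = (y.1 : ℕ), (cycleGraph (y.1 : ℕ)).Adj (Fin.cast h x.2) y.2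
  symm := by
    constructor
    rintro ⟨⟨s, hs⟩, i⟩ ⟨⟨t, ht⟩, j⟩ ⟨h, hadj⟩
    dsimp only at h
    subst h
    exact ⟨rfl, by simpa [Fin.ext_iff] using hadj.symm⟩
  loopless := by
    constructor
    rintro ⟨⟨s, hs⟩, i⟩ ⟨h, hadj⟩
    have : Fin.cast h i = i := by ext; rfl
    rw [this] at hadj
    exact (cycleGraph s).loopless.irrefl i hadj

namespace SimpleGraph

variable {V W X : Type*} {G : SimpleGraph V} {H : SimpleGraph W} {K : SimpleGraph X}

lemma Embedding.nonempty_of_range_subset (f : G ↪g K) (ι : H ↪g K)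
    (h : Set.range f ⊆ Set.range ι) : Nonempty (G ↪g H) := by
  choose g hg using fun v => h ⟨v, rfl⟩
  exact ⟨{ toFun := g
           inj' := fun u v e => f.injective (by rw [← hg u, ← hg v, e])
           map_rel_iff' := fun {u v} => by
             change H.Adj (g u) (g v) ↔ G.Adj u v
             rw [← ι.map_adj_iff, hg, hg, f.map_adj_iff] }⟩

/-- Once every vertex `f v` has no more neighbours than `v`, its neighbourhood is the image of
that of `v`, so the range of `f` is closed under adjacency. -/
lemma Embedding.surjective_of_degree_le [G.LocallyFinite] [H.LocallyFinite] [Nonempty V]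
    (f : G ↪g H) (hH : H.Preconnected) (hdeg : ∀ v, H.degree (f v) ≤ G.degree v) :
    Function.Surjective f := by
  classical
  have hnbr : ∀ v, (G.neighborFinset v).map f.toEmbedding = H.neighborFinset (f v) := by
    intro v
    refine Finset.eq_of_subset_of_card_le (fun w hw => ?_) ?_
    · obtain ⟨u, hu, rfl⟩ := Finset.mem_map.mp hw
      simpa using hu
    · simpa using hdeg v
  have hclosed : ∀ x ∈ Set.range f, ∀ w, H.Adj x w → w ∈ Set.range f := by
    rintro _ ⟨v, rfl⟩ w hw
    rw [← mem_neighborFinset, ← hnbr] at hw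
    obtain ⟨u, -, rfl⟩ := Finset.mem_map.mp hw
    exact ⟨u, rfl⟩
  intro w
  obtain ⟨v⟩ := ‹Nonempty V›
  exact (hH (f v) w).mem_subgraphVerts (H := (⊤ : H.Subgraph).induce (Set.range f))
    (fun x hx w hw => ⟨hx, hclosed x hx w hw, hw⟩) ⟨v, rfl⟩

lemma cycleGraph_degree_le_two {n : ℕ} (v : Fin n) : (cycleGraph n).degree v ≤ 2 := by
  match n with
  | 0 => exact v.elim0
  | 1 => simp [cycleGraph_one_eq_bot]
  | n + 2 => exact cycleGraph_degree_two_le.trans_le Finset.card_le_two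

lemma eq_of_cycleGraph_embedding {a b : ℕ} (ha : 3 ≤ a) (f : cycleGraph a ↪g cycleGraph b) :
    a = b := by
  obtain ⟨a, rfl⟩ : ∃ n, a = n + 3 := ⟨a - 3, by omega⟩
  have hsurj : Function.Surjective f :=
    f.surjective_of_degree_le cycleGraph_preconnected fun v => by
      rw [cycleGraph_degree_three_le]
      exact cycleGraph_degree_le_two (f v)
  simpa using Fintype.card_congr (Equiv.ofBijective f ⟨f.injective, hsurj⟩)

end SimpleGraph

namespace cyclesDisjointUnion

variable {S : Set ℕ}

def summandEmbedding (s : S) : cycleGraph s ↪g cyclesDisjointUnion S where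
  toFun i := ⟨s, i⟩
  inj' _ _ h := eq_of_heq (Sigma.mk.inj h).2
  map_rel_iff' := ⟨fun ⟨_, h⟩ => h, fun h => ⟨rfl, h⟩⟩

lemma fst_eq_of_reachable {x y : Σ s : S, Fin s} (h : (cyclesDisjointUnion S).Reachable x y) :
    x.1 = y.1 := by
  obtain ⟨p⟩ := h
  induction p with
  | nil => rfl
  | cons hadj _ ih => exact (Subtype.ext hadj.1).trans ih

lemma exists_embedding_cycleGraph_of_preconnected {V : Type*} {G : SimpleGraph V} [Nonempty V]
    (hG : G.Preconnected) (f : G ↪g cyclesDisjointUnion S) :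
    ∃ s ∈ S, Nonempty (G ↪g cycleGraph s) := by
  obtain ⟨v₀⟩ := ‹Nonempty V›
  refine ⟨(f v₀).1, (f v₀).1.2, f.nonempty_of_range_subset (summandEmbedding (f v₀).1) ?_⟩
  rintro _ ⟨v, rfl⟩
  have hfst : (f v).1 = (f v₀).1 := fst_eq_of_reachable ((hG v v₀).map f.toHom)
  generalize f v = x at hfst ⊢
  obtain ⟨s, i⟩ := x
  subst hfst
  exact ⟨i, rfl⟩

lemma mem_of_cycleGraph_embedding {k : ℕ} (hk : 3 ≤ k)
    (f : cycleGraph k ↪g cyclesDisjointUnion S) : k ∈ S := by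
  have : Nonempty (Fin k) := ⟨⟨0, by omega⟩⟩
  obtain ⟨s, hs, ⟨g⟩⟩ :=
    exists_embedding_cycleGraph_of_preconnected cycleGraph_preconnected f
  exact eq_of_cycleGraph_embedding hk g ▸ hs

end cyclesDisjointUnion

theorem compl_cyclesDisjointUnion_free_and_types_general
    {α : Type*} (G : SimpleGraph α) (m : ℕ) (hm : 3 ≤ m)
    (hmem : Nonempty (cycleGraph m ↪g Gᶜ))
    (S : Set ℕ) (hS : ∀ s ∈ S, m < s) :
    (¬ Nonempty (G ↪g (cyclesDisjointUnion S)ᶜ)) ∧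
      (∀ k, 3 ≤ k →
        (Nonempty ((cycleGraph k)ᶜ ↪g (cyclesDisjointUnion S)ᶜ) ↔ k ∈ S)) := by
  refine ⟨fun ⟨f⟩ => ?_, fun k hk => ⟨fun ⟨f⟩ => ?_, fun hkS => ?_⟩⟩
  · obtain ⟨e⟩ := hmem
    have f' : Gᶜ ↪g cyclesDisjointUnion S :=
      compl_compl (cyclesDisjointUnion S) ▸ Embedding.complEquiv f
    exact (hS m (cyclesDisjointUnion.mem_of_cycleGraph_embedding hm (f'.comp e))).false
  · exact cyclesDisjointUnion.mem_of_cycleGraph_embedding hk (Embedding.complEquiv.symm f)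
  · exact ⟨Embedding.complEquiv (cyclesDisjointUnion.summandEmbedding ⟨k, hkS⟩)⟩

/-- Let `G` be a finite simple graph whose complement contains an induced
cycle, and let `m` be the maximal `n ≥ 3` such that `cycleGraph n` embeds into `Gᶜ`. If
every element of `S` is strictly greater than `m`, then (1) `G` does not embed into the
complement of the disjoint union `D_S` (the connected union of the complements of the
cycles `C_s`, `s ∈ S`), so this graph is `G`-free; and (2) for every `k ≥ 3`, the
complement of `cycleGraph k` embeds into `(D_S)ᶜ` iff `k ∈ S`. -/
theorem compl_cyclesDisjointUnion_free_and_types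
    {α : Type*} [Fintype α] (G : SimpleGraph α) (m : ℕ) (hm : 3 ≤ m)
    (hmem : Nonempty (cycleGraph m ↪g Gᶜ))
    (hmax : ∀ n, 3 ≤ n → Nonempty (cycleGraph n ↪g Gᶜ) → n ≤ m)
    (S : Set ℕ) (hS : ∀ s ∈ S, m < s) :
    (¬ Nonempty (G ↪g (cyclesDisjointUnion S)ᶜ)) ∧
      (∀ k, 3 ≤ k →
        (Nonempty ((cycleGraph k)ᶜ ↪g (cyclesDisjointUnion S)ᶜ) ↔ k ∈ S)) :=
  compl_cyclesDisjointUnion_free_and_types_general G m hm hmem S hS
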